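/- Let Ω ⊆ ℝᵐ be a bounded open set, T > 0, and let u : ℝᵐ × ℝ → ℝ be smooth (C^∞). Assume the weak Neumann condition: for every smooth φ : ℝᵐ × ℝ → ℝ, ∫₀ᵀ ∫_Ω (Δₓu)(x,t) φ(x,t) dx dt = − ∫₀ᵀ ∫_Ω ⟨∇ₓu(x,t), ∇ₓφ(x,t)⟩ dx dt, where Δₓ = Σᵢ ∂²/∂xᵢ² is the spatial Laplacian and ∇ₓ the spatial gradient. Then the time derivative ∂ₜu satisfies the same weak Neumann condition at each time: for every t ∈ [0, T] and every smooth f : ℝᵐ → ℝ, ∫_Ω (Δₓ∂ₜu)(x,t) f(x) dx = − ∫_Ω ⟨∇ₓ∂ₜu(x,t), ∇ₓf(x)⟩ dx. -/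

import Mathlib

open MeasureTheory

/-- Partial derivative of `f : ℝᵐ → ℝ` in the `i`-th coordinate direction. -/
noncomputable def spd {m : ℕ} (i : Fin m) (f : (Fin m → ℝ) → ℝ) (x : Fin m → ℝ) : ℝ :=
  fderiv ℝ f x (Pi.single i 1)

/-- The Laplacian `Δf = Σᵢ ∂ᵢ∂ᵢ f` of `f : ℝᵐ → ℝ`. -/
noncomputable def slap {m : ℕ} (f : (Fin m → ℝ) → ℝ) (x : Fin m → ℝ) : ℝ :=
  ∑ i : Fin m, spd i (spd i f) x

section helpers
variable {m : ℕ}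

/-- partial derivative in direction `(Pi.single i 1, 0)` of a space-time function -/
noncomputable def Pd (i : Fin m) (W : ((Fin m → ℝ) × ℝ) → ℝ) (p : (Fin m → ℝ) × ℝ) : ℝ :=
  fderiv ℝ W p (Pi.single i 1, 0)

/-- time derivative of a space-time function -/
noncomputable def Td (W : ((Fin m → ℝ) × ℝ) → ℝ) (p : (Fin m → ℝ) × ℝ) : ℝ :=
  fderiv ℝ W p (0, 1)

theorem contDiff_pd {i : Fin m} {W : ((Fin m → ℝ) × ℝ) → ℝ} (hW : ContDiff ℝ (⊤ : ℕ∞) W) :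
    ContDiff ℝ (⊤ : ℕ∞) (Pd i W) :=
  (hW.fderiv_right (by simp)).clm_apply contDiff_const

theorem contDiff_td {W : ((Fin m → ℝ) × ℝ) → ℝ} (hW : ContDiff ℝ (⊤ : ℕ∞) W) :
    ContDiff ℝ (⊤ : ℕ∞) (Td W) :=
  (hW.fderiv_right (by simp)).clm_apply contDiff_const

theorem contDiff_spd {i : Fin m} {f : (Fin m → ℝ) → ℝ} (hf : ContDiff ℝ (⊤ : ℕ∞) f) :
    ContDiff ℝ (⊤ : ℕ∞) (spd i f) :=
  (hf.fderiv_right (by simp)).clm_apply contDiff_const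

theorem spd_pd {i : Fin m} {W : ((Fin m → ℝ) × ℝ) → ℝ} (hW : ContDiff ℝ (⊤ : ℕ∞) W)
    (x : Fin m → ℝ) (t : ℝ) : spd i (fun y => W (y, t)) x = Pd i W (x, t) := by
  have h : HasFDerivAt (fun y : Fin m → ℝ => W (y, t))
      ((fderiv ℝ W (x, t)).comp (ContinuousLinearMap.inl ℝ _ ℝ)) x :=
    ((hW.differentiable (by simp) (x, t)).hasFDerivAt).comp x (hasFDerivAt_prodMk_left x t)
  rw [spd, h.fderiv]
  simp [Pd]

theorem deriv_td {W : ((Fin m → ℝ) × ℝ) → ℝ} (hW : ContDiff ℝ (⊤ : ℕ∞) W)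
    (y : Fin m → ℝ) (t : ℝ) : deriv (fun s => W (y, s)) t = Td W (y, t) := by
  have h := (((hW.differentiable (by simp) (y, t)).hasFDerivAt).comp t
    (hasFDerivAt_prodMk_right y t)).hasDerivAt
  simpa [Td, Function.comp_def] using h.deriv

theorem fderiv_apply_comm {W : ((Fin m → ℝ) × ℝ) → ℝ} (hW : ContDiff ℝ (⊤ : ℕ∞) W)
    (p v w : (Fin m → ℝ) × ℝ) :
    fderiv ℝ (fun q => fderiv ℝ W q v) p w = fderiv ℝ (fun q => fderiv ℝ W q w) p v := by
  have hd : DifferentiableAt ℝ (fderiv ℝ W) p :=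
    ((hW.fderiv_right (m := ((⊤ : ℕ∞) : WithTop ℕ∞)) (by simp)).differentiable (by simp)) p
  have h1 : ∀ a b : (Fin m → ℝ) × ℝ,
      fderiv ℝ (fun q => fderiv ℝ W q a) p b = fderiv ℝ (fderiv ℝ W) p b a := by
    intro a b
    rw [fderiv_clm_apply hd (differentiableAt_const a)]
    simp
  rw [h1, h1]
  exact (hW.contDiffAt.isSymmSndFDerivAt (by simp; exact WithTop.coe_le_coe.2 le_top)) w v

theorem td_pd_comm {i : Fin m} {W : ((Fin m → ℝ) × ℝ) → ℝ} (hW : ContDiff ℝ (⊤ : ℕ∞) W)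
    (p : (Fin m → ℝ) × ℝ) : Td (Pd i W) p = Pd i (Td W) p :=
  fderiv_apply_comm hW p (Pi.single i 1, 0) (0, 1)

theorem spd_spd {i : Fin m} {W : ((Fin m → ℝ) × ℝ) → ℝ} (hW : ContDiff ℝ (⊤ : ℕ∞) W)
    (x : Fin m → ℝ) (t : ℝ) :
    spd i (spd i (fun y => W (y, t))) x = Pd i (Pd i W) (x, t) := by
  have h1 : spd i (fun y => W (y, t)) = fun y => Pd i W (y, t) :=
    funext fun y => spd_pd hW y t
  rw [h1, spd_pd (contDiff_pd hW)]

theorem slap_eq {W : ((Fin m → ℝ) × ℝ) → ℝ} (hW : ContDiff ℝ (⊤ : ℕ∞) W)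
    (x : Fin m → ℝ) (t : ℝ) :
    slap (fun y => W (y, t)) x = ∑ i : Fin m, Pd i (Pd i W) (x, t) := by
  unfold slap
  exact Finset.sum_congr rfl fun i _ => spd_spd hW x t

end helpers

theorem integrableOn_of_continuous {m : ℕ} {Ω : Set (Fin m → ℝ)}
    (hΩb : Bornology.IsBounded Ω) {h : (Fin m → ℝ) → ℝ} (hh : Continuous h) :
    IntegrableOn h Ω := by
  exact (hh.continuousOn.integrableOn_compact hΩb.isCompact_closure).mono_set subset_closure

theorem param_hasDerivAt {m : ℕ} {Ω : Set (Fin m → ℝ)} (hΩo : IsOpen Ω)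
    (hΩb : Bornology.IsBounded Ω) {g : ((Fin m → ℝ) × ℝ) → ℝ} (hg : ContDiff ℝ (⊤ : ℕ∞) g)
    (t₀ : ℝ) :
    HasDerivAt (fun s => ∫ x in Ω, g (x, s)) (∫ x in Ω, Td g (x, t₀)) t₀ := by
  have hgc : Continuous g := hg.continuous
  have htdc : Continuous (Td g) := ((hg.fderiv_right (m := ((⊤ : ℕ∞) : WithTop ℕ∞)) (by simp)).clm_apply contDiff_const).continuous
  have hK : IsCompact (closure Ω ×ˢ Set.Icc (t₀ - 1) (t₀ + 1)) :=
    hΩb.isCompact_closure.prod isCompact_Icc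
  obtain ⟨C, hC⟩ := hK.exists_bound_of_continuousOn htdc.continuousOn
  have key := hasDerivAt_integral_of_dominated_loc_of_deriv_le (μ := volume.restrict Ω)
    (F := fun s x => g (x, s)) (F' := fun s x => Td g (x, s)) (x₀ := t₀)
    (bound := fun _ => C) (Metric.ball_mem_nhds t₀ one_pos)
    (Filter.Eventually.of_forall fun s =>
      (hgc.comp (Continuous.prodMk_left s)).aestronglyMeasurable)
    (integrableOn_of_continuous hΩb (hgc.comp (Continuous.prodMk_left t₀)))
    ((htdc.comp (Continuous.prodMk_left t₀)).aestronglyMeasurable)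
    ?_ (integrableOn_const hΩb.measure_lt_top.ne) ?_
  · exact key.2
  · refine (ae_restrict_iff' hΩo.measurableSet).2 (Filter.Eventually.of_forall fun x hx => ?_)
    intro s hs
    refine hC (x, s) ⟨subset_closure hx, ?_⟩
    have := Metric.mem_ball.1 hs
    rw [Real.dist_eq] at this
    constructor <;> [linarith [abs_lt.1 this] ; linarith [(abs_lt.1 this).2]]
  · refine (ae_restrict_iff' hΩo.measurableSet).2 (Filter.Eventually.of_forall fun x hx => ?_)
    intro s _
    have h := (((hg.differentiable (by simp) (x, s)).hasFDerivAt).comp s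
      (hasFDerivAt_prodMk_right x s)).hasDerivAt
    simpa [Td, Function.comp_def] using h

theorem contDiff_poly (p : Polynomial ℝ) : ContDiff ℝ (⊤ : ℕ∞) (fun x : ℝ => p.eval x) := by
  induction p using Polynomial.induction_on with
  | C a => simpa using contDiff_const (c := a)
  | add p q hp hq => simpa using hp.add hq
  | monomial n a h =>
      simpa [mul_assoc] using (contDiff_const (c := a)).mul (contDiff_id.pow (n + 1))

theorem eq_zero_of_integral_poly_mul {T : ℝ} (hT : 0 < T) {G : ℝ → ℝ} (hGc : Continuous G)
    (h : ∀ ψ : ℝ → ℝ, ContDiff ℝ (⊤ : ℕ∞) ψ → (∫ t in (0:ℝ)..T, ψ t * G t) = 0) :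
    ∀ t ∈ Set.Icc (0:ℝ) T, G t = 0 := by
  have hint : ∀ h : ℝ → ℝ, Continuous h → IntervalIntegrable h volume 0 T := fun h hh =>
    hh.intervalIntegrable _ _
  set I := ∫ t in (0:ℝ)..T, G t * G t with hIdef
  have hInn : 0 ≤ I := intervalIntegral.integral_nonneg hT.le fun t _ => mul_self_nonneg _
  have hIle : ∀ ε > (0:ℝ), I ≤ ε := by
    intro ε hε
    set C := (∫ t in (0:ℝ)..T, |G t|) + 1 with hCdef
    have habs : 0 ≤ ∫ t in (0:ℝ)..T, |G t| :=
      intervalIntegral.integral_nonneg hT.le fun t _ => abs_nonneg _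
    have hC0 : 0 < C := by linarith
    obtain ⟨p, hp⟩ := exists_polynomial_near_of_continuousOn 0 T G hGc.continuousOn (ε / C)
      (by positivity)
    have hpc : Continuous fun t : ℝ => p.eval t := (contDiff_poly p).continuous
    have h0 : (∫ t in (0:ℝ)..T, p.eval t * G t) = 0 := h _ (contDiff_poly p)
    have hIeq : (∫ t in (0:ℝ)..T, G t * (G t - p.eval t)) = I := by
      have := intervalIntegral.integral_sub (hint (fun t => G t * G t) (hGc.mul hGc)) (hint (fun t => p.eval t * G t) (hpc.mul hGc))
      rw [← hIdef] at this
      calc (∫ t in (0:ℝ)..T, G t * (G t - p.eval t))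
          = ∫ t in (0:ℝ)..T, (G t * G t - p.eval t * G t) := by
            apply intervalIntegral.integral_congr
            intro t _
            ring
        _ = I - ∫ t in (0:ℝ)..T, p.eval t * G t := this
        _ = I := by rw [h0, sub_zero]
    have hstep : I ≤ (∫ t in (0:ℝ)..T, |G t| * (ε / C)) := by
      rw [← hIeq]
      refine le_trans (le_abs_self _) ?_
      refine le_trans (intervalIntegral.abs_integral_le_integral_abs hT.le) ?_
      refine intervalIntegral.integral_mono_on hT.le
        (hint _ (hGc.mul (hGc.sub hpc)).abs) (hint _ ((hGc.abs).mul continuous_const)) ?_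
      intro t ht
      rw [abs_mul]
      exact mul_le_mul_of_nonneg_left (le_of_lt (by simpa [abs_sub_comm] using hp t ht))
        (abs_nonneg _)
    have : (∫ t in (0:ℝ)..T, |G t| * (ε / C)) ≤ ε := by
      rw [intervalIntegral.integral_mul_const]
      have h1 : (∫ t in (0:ℝ)..T, |G t|) ≤ C := by linarith
      calc (∫ t in (0:ℝ)..T, |G t|) * (ε / C) ≤ C * (ε / C) :=
            mul_le_mul_of_nonneg_right h1 (by positivity)
        _ = ε := by field_simp
    linarith
  have hI0 : I = 0 := by
    refine le_antisymm ?_ hInn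
    by_contra hpos
    push_neg at hpos
    linarith [hIle (I / 2) (by linarith)]
  intro t ht
  by_contra hG0
  have : 0 < I := intervalIntegral.integral_pos hT ((hGc.mul hGc).continuousOn)
    (fun x _ => mul_self_nonneg _) ⟨t, ht, mul_self_pos.2 hG0⟩
  linarith

section tdalg
variable {m : ℕ} {p : (Fin m → ℝ) × ℝ}

theorem td_add {A B : ((Fin m → ℝ) × ℝ) → ℝ} (hA : DifferentiableAt ℝ A p)
    (hB : DifferentiableAt ℝ B p) : Td (fun q => A q + B q) p = Td A p + Td B p := by
  unfold Td
  rw [fderiv_fun_add hA hB]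
  simp

theorem td_mul_fst {A : ((Fin m → ℝ) × ℝ) → ℝ} {c : (Fin m → ℝ) → ℝ}
    (hA : DifferentiableAt ℝ A p) (hc : ContDiff ℝ (⊤ : ℕ∞) c) :
    Td (fun q => A q * c q.1) p = Td A p * c p.1 := by
  have hcq : HasFDerivAt (fun q : (Fin m → ℝ) × ℝ => c q.1)
      ((fderiv ℝ c p.1).comp (ContinuousLinearMap.fst ℝ _ _)) p :=
    ((hc.differentiable (by simp) p.1).hasFDerivAt).comp p hasFDerivAt_fst
  unfold Td
  rw [fderiv_fun_mul hA hcq.differentiableAt, hcq.fderiv]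
  simp [mul_comm]

theorem td_sum {A : Fin m → ((Fin m → ℝ) × ℝ) → ℝ}
    (hA : ∀ i, DifferentiableAt ℝ (A i) p) :
    Td (fun q => ∑ i : Fin m, A i q) p = ∑ i : Fin m, Td (A i) p := by
  unfold Td
  rw [fderiv_fun_sum fun i _ => hA i]
  simp

theorem td_g_eq {U : ((Fin m → ℝ) × ℝ) → ℝ} {f : (Fin m → ℝ) → ℝ}
    (hU : ContDiff ℝ (⊤ : ℕ∞) U) (hf : ContDiff ℝ (⊤ : ℕ∞) f) :
    Td (fun q => (∑ i : Fin m, Pd i (Pd i U) q) * f q.1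
        + ∑ i : Fin m, Pd i U q * spd i f q.1) p
      = (∑ i : Fin m, Pd i (Pd i (Td U)) p) * f p.1
        + ∑ i : Fin m, Pd i (Td U) p * spd i f p.1 := by
  have dPP : ∀ i : Fin m, DifferentiableAt ℝ (Pd i (Pd i U)) p := fun i =>
    ((contDiff_pd (contDiff_pd hU)).differentiable (by simp)) p
  have dP : ∀ i : Fin m, DifferentiableAt ℝ (Pd i U) p := fun i =>
    ((contDiff_pd hU).differentiable (by simp)) p
  have dS : DifferentiableAt ℝ (fun q => ∑ i : Fin m, Pd i (Pd i U) q) p :=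
    ((ContDiff.sum fun i _ => contDiff_pd (contDiff_pd hU)).differentiable (by simp)) p
  have dA : DifferentiableAt ℝ (fun q => (∑ i : Fin m, Pd i (Pd i U) q) * f q.1) p :=
    (((ContDiff.sum fun i _ => contDiff_pd (contDiff_pd hU)).mul
      (hf.comp contDiff_fst)).differentiable (by simp)) p
  have dB : DifferentiableAt ℝ (fun q => ∑ i : Fin m, Pd i U q * spd i f q.1) p :=
    ((ContDiff.sum fun (i : Fin m) _ => (contDiff_pd hU).mul
      ((contDiff_spd hf).comp contDiff_fst)).differentiable (by simp)) p
  have h2 : Td (fun q => ∑ i : Fin m, Pd i U q * spd i f q.1) p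
      = ∑ i : Fin m, Td (fun q => Pd i U q * spd i f q.1) p :=
    td_sum (A := fun i q => Pd i U q * spd i f q.1) fun i =>
      (((contDiff_pd hU).mul ((contDiff_spd hf).comp contDiff_fst)).differentiable (by simp)) p
  rw [td_add dA dB, td_mul_fst dS hf, td_sum dPP, h2]
  congr 1
  · congr 1
    refine Finset.sum_congr rfl fun i _ => ?_
    calc Td (Pd i (Pd i U)) p = Pd i (Td (Pd i U)) p := td_pd_comm (contDiff_pd hU) p
      _ = Pd i (Pd i (Td U)) p :=
        congrArg (fun W => Pd i W p) (funext (td_pd_comm hU))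
  · refine Finset.sum_congr rfl fun i _ => ?_
    rw [td_mul_fst (dP i) (contDiff_spd hf), td_pd_comm hU]

end tdalg

/-- If a smooth `u : ℝᵐ × ℝ → ℝ` satisfies the weak Neumann boundary condition on a
bounded open set `Ω` over the time interval `[0, T]` (tested against all smooth `φ`),
then its time derivative `∂ₜu` satisfies the same weak Neumann condition at each
time `t ∈ [0, T]`. -/
theorem time_derivative_inherits_weak_neumann
    {m : ℕ} (Ω : Set (Fin m → ℝ)) (hΩo : IsOpen Ω) (hΩb : Bornology.IsBounded Ω)
    (T : ℝ) (hT : 0 < T)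
    (u : (Fin m → ℝ) → ℝ → ℝ)
    (hu : ContDiff ℝ (⊤ : ℕ∞) (fun q : (Fin m → ℝ) × ℝ => u q.1 q.2))
    (hweak : ∀ φ : (Fin m → ℝ) → ℝ → ℝ,
      ContDiff ℝ (⊤ : ℕ∞) (fun q : (Fin m → ℝ) × ℝ => φ q.1 q.2) →
      (∫ t in (0 : ℝ)..T, ∫ x in Ω, slap (fun y => u y t) x * φ x t) =
        - ∫ t in (0 : ℝ)..T, ∫ x in Ω,
            ∑ i : Fin m, spd i (fun y => u y t) x * spd i (fun y => φ y t) x) :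
    ∀ t ∈ Set.Icc (0 : ℝ) T, ∀ f : (Fin m → ℝ) → ℝ, ContDiff ℝ (⊤ : ℕ∞) f →
      (∫ x in Ω, slap (fun y => deriv (u y) t) x * f x) =
        - ∫ x in Ω, ∑ i : Fin m, spd i (fun y => deriv (u y) t) x * spd i f x := by
  intro t ht f hf
  set U : ((Fin m → ℝ) × ℝ) → ℝ := fun q => u q.1 q.2 with hUdef
  set gA : ((Fin m → ℝ) × ℝ) → ℝ :=
    fun q => (∑ i : Fin m, Pd i (Pd i U) q) * f q.1 with hgAdef
  set gB : ((Fin m → ℝ) × ℝ) → ℝ :=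
    fun q => ∑ i : Fin m, Pd i U q * spd i f q.1 with hgBdef
  set g : ((Fin m → ℝ) × ℝ) → ℝ := fun q => gA q + gB q with hgdef
  have hgA : ContDiff ℝ (⊤ : ℕ∞) gA :=
    (ContDiff.sum fun i _ => contDiff_pd (contDiff_pd hu)).mul (hf.comp contDiff_fst)
  have hgB : ContDiff ℝ (⊤ : ℕ∞) gB :=
    ContDiff.sum fun (i : Fin m) _ => (contDiff_pd hu).mul
      ((contDiff_spd hf).comp contDiff_fst)
  have hg : ContDiff ℝ (⊤ : ℕ∞) g := hgA.add hgB
  -- derivative of t ↦ ∫ g and continuity facts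
  have hGd : ∀ s : ℝ, HasDerivAt (fun s' => ∫ x in Ω, g (x, s'))
      (∫ x in Ω, Td g (x, s)) s := fun s => param_hasDerivAt hΩo hΩb hg s
  have hGc : Continuous fun s => ∫ x in Ω, g (x, s) :=
    continuous_iff_continuousAt.2 fun s => (hGd s).continuousAt
  have hHc : Continuous fun s => ∫ x in Ω, Td g (x, s) :=
    continuous_iff_continuousAt.2 fun s =>
      (param_hasDerivAt hΩo hΩb (contDiff_td hg) s).continuousAt
  have hAc : Continuous fun s => ∫ x in Ω, gA (x, s) :=
    continuous_iff_continuousAt.2 fun s => (param_hasDerivAt hΩo hΩb hgA s).continuousAt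
  have hBc : Continuous fun s => ∫ x in Ω, gB (x, s) :=
    continuous_iff_continuousAt.2 fun s => (param_hasDerivAt hΩo hΩb hgB s).continuousAt
  have hx_int : ∀ (h : ((Fin m → ℝ) × ℝ) → ℝ), ContDiff ℝ (⊤ : ℕ∞) h → ∀ s : ℝ,
      IntegrableOn (fun x => h (x, s)) Ω := fun h hh s =>
    integrableOn_of_continuous hΩb (hh.continuous.comp (Continuous.prodMk_left s))
  -- orthogonality against smooth test functions in time
  have horth : ∀ ψ : ℝ → ℝ, ContDiff ℝ (⊤ : ℕ∞) ψ →
      (∫ s in (0:ℝ)..T, ψ s * ∫ x in Ω, g (x, s)) = 0 := by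
    intro ψ hψ
    have hφ : ContDiff ℝ (⊤ : ℕ∞) (fun q : (Fin m → ℝ) × ℝ => f q.1 * ψ q.2) :=
      (hf.comp contDiff_fst).mul (hψ.comp contDiff_snd)
    have hw := hweak (fun x s => f x * ψ s) hφ
    have hpt1 : ∀ (s : ℝ) (x : Fin m → ℝ),
        slap (fun y => u y s) x * (f x * ψ s) = ψ s * gA (x, s) := by
      intro s x
      have h1 : slap (fun y => u y s) x = ∑ i : Fin m, Pd i (Pd i U) (x, s) :=
        slap_eq hu x s
      rw [h1, hgAdef]
      ring
    have hpt2 : ∀ (s : ℝ) (x : Fin m → ℝ),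
        (∑ i : Fin m, spd i (fun y => u y s) x * spd i (fun y => f y * ψ s) x)
          = ψ s * gB (x, s) := by
      intro s x
      have h1 : ∀ i : Fin m, spd i (fun y => u y s) x = Pd i U (x, s) := fun i =>
        spd_pd hu x s
      have h2 : ∀ i : Fin m, spd i (fun y => f y * ψ s) x = ψ s * spd i f x := by
        intro i
        rw [spd, fderiv_mul_const ((hf.differentiable (by simp)) x)]
        simp [spd, mul_comm]
      rw [hgBdef]
      simp only []
      rw [Finset.mul_sum]
      refine Finset.sum_congr rfl fun i _ => ?_
      rw [h1 i, h2 i]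
      ring
    have hL : (∫ s in (0:ℝ)..T, ∫ x in Ω, slap (fun y => u y s) x * (f x * ψ s))
        = ∫ s in (0:ℝ)..T, ψ s * ∫ x in Ω, gA (x, s) := by
      refine intervalIntegral.integral_congr fun s _ => ?_
      simp only [hpt1]
      rw [integral_const_mul]
    have hR : (∫ s in (0:ℝ)..T, ∫ x in Ω,
          ∑ i : Fin m, spd i (fun y => u y s) x * spd i (fun y => f y * ψ s) x)
        = ∫ s in (0:ℝ)..T, ψ s * ∫ x in Ω, gB (x, s) := by
      refine intervalIntegral.integral_congr fun s _ => ?_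
      simp only [hpt2]
      rw [integral_const_mul]
    rw [hL, hR] at hw
    have hsum : (∫ s in (0:ℝ)..T, ψ s * ∫ x in Ω, g (x, s))
        = (∫ s in (0:ℝ)..T, ψ s * ∫ x in Ω, gA (x, s))
          + ∫ s in (0:ℝ)..T, ψ s * ∫ x in Ω, gB (x, s) := by
      rw [← intervalIntegral.integral_add (f := fun s => ψ s * ∫ x in Ω, gA (x, s))
          (g := fun s => ψ s * ∫ x in Ω, gB (x, s))
        ((hψ.continuous.mul hAc).intervalIntegrable _ _)
        ((hψ.continuous.mul hBc).intervalIntegrable _ _)]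
      refine intervalIntegral.integral_congr fun s _ => ?_
      rw [hgdef]
      have : (∫ x in Ω, gA (x, s) + gB (x, s))
          = (∫ x in Ω, gA (x, s)) + ∫ x in Ω, gB (x, s) :=
        integral_add (hx_int gA hgA s) (hx_int gB hgB s)
      rw [this]
      ring
    rw [hsum, hw]
    ring
  -- G vanishes on [0, T]
  have hGzero : ∀ s ∈ Set.Icc (0:ℝ) T, (∫ x in Ω, g (x, s)) = 0 :=
    eq_zero_of_integral_poly_mul hT hGc horth
  -- H vanishes on (0, T), hence on [0, T] by continuity
  have hIoo : ∀ s ∈ Set.Ioo (0:ℝ) T, (∫ x in Ω, Td g (x, s)) = 0 := by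
    intro s hs
    have hev : (fun _ : ℝ => (0:ℝ)) =ᶠ[nhds s] fun s' => ∫ x in Ω, g (x, s') := by
      filter_upwards [Ioo_mem_nhds hs.1 hs.2] with s' hs'
      exact (hGzero s' (Set.Ioo_subset_Icc_self hs')).symm
    have h0 : HasDerivAt (fun _ : ℝ => (0:ℝ)) (∫ x in Ω, Td g (x, s)) s :=
      (hGd s).congr_of_eventuallyEq hev
    exact h0.unique (hasDerivAt_const s 0)
  have hIcc : ∀ s ∈ Set.Icc (0:ℝ) T, (∫ x in Ω, Td g (x, s)) = 0 := by
    have hcl : closure (Set.Ioo (0:ℝ) T) = Set.Icc 0 T := closure_Ioo hT.ne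
    intro s hs
    rw [← hcl] at hs
    exact Set.EqOn.closure (fun s' hs' => hIoo s' hs') hHc continuous_const hs
  have hH0 : (∫ x in Ω, Td g (x, t)) = 0 := hIcc t ht
  -- identify the integrand of H with the target integrands
  have hder : (fun y => deriv (u y) t) = fun y => Td U (y, t) :=
    funext fun y => deriv_td hu y t
  have hslap : ∀ x, slap (fun y => deriv (u y) t) x
      = ∑ i : Fin m, Pd i (Pd i (Td U)) (x, t) := by
    intro x
    rw [hder]
    exact slap_eq (contDiff_td hu) x t
  have hspd : ∀ (i : Fin m) (x), spd i (fun y => deriv (u y) t) x = Pd i (Td U) (x, t) := by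
    intro i x
    rw [hder]
    exact spd_pd (contDiff_td hu) x t
  have htd : ∀ x, Td g (x, t)
      = (∑ i : Fin m, Pd i (Pd i (Td U)) (x, t)) * f x
        + ∑ i : Fin m, Pd i (Td U) (x, t) * spd i f x := by
    intro x
    rw [hgdef, hgAdef, hgBdef]
    exact td_g_eq hu hf
  have hsplit : (∫ x in Ω, Td g (x, t))
      = (∫ x in Ω, (∑ i : Fin m, Pd i (Pd i (Td U)) (x, t)) * f x)
        + ∫ x in Ω, ∑ i : Fin m, Pd i (Td U) (x, t) * spd i f x := by
    have h1 : (fun x => Td g (x, t)) = fun x =>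
        (∑ i : Fin m, Pd i (Pd i (Td U)) (x, t)) * f x
          + ∑ i : Fin m, Pd i (Td U) (x, t) * spd i f x := funext htd
    rw [h1]
    exact integral_add
      (hx_int (fun q => (∑ i : Fin m, Pd i (Pd i (Td U)) q) * f q.1)
        ((ContDiff.sum fun i _ => contDiff_pd (contDiff_pd (contDiff_td hu))).mul
          (hf.comp contDiff_fst)) t)
      (hx_int (fun q => ∑ i : Fin m, Pd i (Td U) q * spd i f q.1)
        (ContDiff.sum fun (i : Fin m) _ => (contDiff_pd (contDiff_td hu)).mul
          ((contDiff_spd hf).comp contDiff_fst)) t)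
  have e1 : (∫ x in Ω, slap (fun y => deriv (u y) t) x * f x)
      = ∫ x in Ω, (∑ i : Fin m, Pd i (Pd i (Td U)) (x, t)) * f x := by
    congr 1
    funext x
    rw [hslap x]
  have e2 : (∫ x in Ω, ∑ i : Fin m, spd i (fun y => deriv (u y) t) x * spd i f x)
      = ∫ x in Ω, ∑ i : Fin m, Pd i (Td U) (x, t) * spd i f x := by
    congr 1
    funext x
    exact Finset.sum_congr rfl fun i _ => by rw [hspd i x]
  rw [e1, e2]
  linarith [hsplit, hH0]
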